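/- arXiv:2408.15546 — 4 statements merged into one kernel-verified Lean document; each statement's English description precedes it below -/
import Mathlib

section
/- Let N be a normal subgroup of a group G. If G is real (every element of G is conjugate in G to its inverse), then N is achiral. -/
def wordMapImage {G : Type*} [Group G] {d : ℕ} (w : FreeGroup (Fin d)) : Set G :=
  Set.range (fun f : Fin d → G => FreeGroup.lift f w)

def IsAchiral (G : Type*) [Group G] : Prop :=
  ∀ (d : ℕ) (w : FreeGroup (Fin d)) (h : G), h ∈ wordMapImage w → h⁻¹ ∈ wordMapImage w

lemma lift_hom {H K : Type*} [Group H] [Group K] (φ : H →* K) {d : ℕ}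
    (f : Fin d → H) (w : FreeGroup (Fin d)) :
    φ (FreeGroup.lift f w) = FreeGroup.lift (fun i => φ (f i)) w := by
  have := FreeGroup.lift_unique (f := fun i => φ (f i)) (φ.comp (FreeGroup.lift f))
    (fun i => by simp) (x := w)
  simpa using this

theorem stmt3 {G : Type*} [Group G] (N : Subgroup G) [N.Normal]
    (hreal : ∀ g : G, ∃ x : G, x * g * x⁻¹ = g⁻¹) : IsAchiral N := by
  intro d w h hh
  obtain ⟨f, hf⟩ := hh
  simp only at hf
  obtain ⟨x, hx⟩ := hreal ((h : G))
  refine ⟨fun i => ⟨x * (f i : G) * x⁻¹,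
    Subgroup.Normal.conj_mem ‹N.Normal› _ (f i).2 x⟩, ?_⟩
  apply Subtype.ext
  have h1 := lift_hom N.subtype (fun i => (⟨x * (f i : G) * x⁻¹,
    Subgroup.Normal.conj_mem ‹N.Normal› _ (f i).2 x⟩ : N)) w
  have h2 := lift_hom ((MulAut.conj x).toMonoidHom.comp N.subtype) f w
  simp only [MonoidHom.comp_apply, MulEquiv.coe_toMonoidHom, MulAut.conj_apply,
    Subgroup.coe_subtype] at h1 h2 ⊢
  rw [h1, ← h2, hf]
  simpa [div_eq_mul_inv] using hx
end

section
/- For every g in SL_n(k) (k any field), there is an automorphism ψ of SL_n(k) with ψ(g) = g⁻¹. Consequently SL_n(k) is achiral, and so is PSL_n(k). -/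
open Polynomial Matrix DirectSum

namespace Stmt6Aux

variable {k : Type*} [Field k]

noncomputable def lam (q r : k[X]) : k := (r %ₘ q).coeff (q.natDegree - 1)

lemma lam_add (q a b : k[X]) : lam q (a + b) = lam q a + lam q b := by
  simp [lam, add_modByMonic]

lemma lam_Csmul (q : k[X]) (r : k) (a : k[X]) : lam q (C r * a) = r * lam q a := by
  rw [lam, lam, ← smul_eq_C_mul, smul_modByMonic, coeff_smul, smul_eq_mul]

lemma lam_eq_of_dvd_sub {q : k[X]} (hq : q.Monic) {a b : k[X]} (h : q ∣ a - b) :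
    lam q a = lam q b := by
  have h0 : (a - b) %ₘ q = 0 := (modByMonic_eq_zero_iff_dvd hq).2 h
  rw [sub_modByMonic, sub_eq_zero] at h0
  simp [lam, h0]

noncomputable def cpair (q : k[X]) (u v : k[X] ⧸ Submodule.span k[X] {q}) : k :=
  lam q (Quotient.out u * Quotient.out v)

lemma mk_out {q : k[X]} (u : k[X] ⧸ Submodule.span k[X] {q}) :
    Submodule.Quotient.mk (Quotient.out u) = u := Quotient.out_eq' u

lemma dvd_of_mk_eq {q a b : k[X]}
    (h : (Submodule.Quotient.mk a : k[X] ⧸ Submodule.span k[X] {q}) = Submodule.Quotient.mk b) :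
    q ∣ a - b := by
  have := (Submodule.Quotient.eq _).1 h
  exact Ideal.mem_span_singleton.mp this

lemma cpair_mk {q : k[X]} (hq : q.Monic) (a b : k[X]) :
    cpair q (Submodule.Quotient.mk a) (Submodule.Quotient.mk b) = lam q (a * b) := by
  apply lam_eq_of_dvd_sub hq
  have h1 : q ∣ Quotient.out (Submodule.Quotient.mk a (p := Submodule.span k[X] {q})) - a :=
    dvd_of_mk_eq (by rw [mk_out])
  have h2 : q ∣ Quotient.out (Submodule.Quotient.mk b (p := Submodule.span k[X] {q})) - b :=
    dvd_of_mk_eq (by rw [mk_out])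
  have : Quotient.out (Submodule.Quotient.mk a (p := Submodule.span k[X] {q})) *
      Quotient.out (Submodule.Quotient.mk b (p := Submodule.span k[X] {q})) - a * b =
      (Quotient.out (Submodule.Quotient.mk a (p := Submodule.span k[X] {q})) - a) *
        Quotient.out (Submodule.Quotient.mk b (p := Submodule.span k[X] {q})) +
      a * (Quotient.out (Submodule.Quotient.mk b (p := Submodule.span k[X] {q})) - b) := by ring
  show q ∣ _ * _ - a * b
  rw [this]
  exact dvd_add (h1.mul_right _) (h2.mul_left _)


variable {q : k[X]}

lemma cpair_comm (u v : k[X] ⧸ Submodule.span k[X] {q}) : cpair q u v = cpair q v u := by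
  rw [cpair, cpair, mul_comm]

lemma cpair_zero_left (hq : q.Monic) (v : k[X] ⧸ Submodule.span k[X] {q}) :
    cpair q 0 v = 0 := by
  obtain ⟨b, rfl⟩ := Submodule.Quotient.mk_surjective _ v
  rw [show (0 : k[X] ⧸ Submodule.span k[X] {q}) = Submodule.Quotient.mk 0 from
    (Submodule.Quotient.mk_zero _).symm, cpair_mk hq]
  simp [lam]

lemma cpair_add_left (hq : q.Monic) (u₁ u₂ v : k[X] ⧸ Submodule.span k[X] {q}) :
    cpair q (u₁ + u₂) v = cpair q u₁ v + cpair q u₂ v := by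
  obtain ⟨a₁, rfl⟩ := Submodule.Quotient.mk_surjective _ u₁
  obtain ⟨a₂, rfl⟩ := Submodule.Quotient.mk_surjective _ u₂
  obtain ⟨b, rfl⟩ := Submodule.Quotient.mk_surjective _ v
  rw [← Submodule.Quotient.mk_add, cpair_mk hq, cpair_mk hq, cpair_mk hq, add_mul, lam_add]

lemma cpair_Csmul_left (hq : q.Monic) (r : k) (u v : k[X] ⧸ Submodule.span k[X] {q}) :
    cpair q ((C r : k[X]) • u) v = r * cpair q u v := by
  obtain ⟨a, rfl⟩ := Submodule.Quotient.mk_surjective _ u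
  obtain ⟨b, rfl⟩ := Submodule.Quotient.mk_surjective _ v
  rw [← Submodule.Quotient.mk_smul, smul_eq_mul, cpair_mk hq, cpair_mk hq, mul_assoc, lam_Csmul]

lemma cpair_X (hq : q.Monic) (u v : k[X] ⧸ Submodule.span k[X] {q}) :
    cpair q ((X : k[X]) • u) v = cpair q u ((X : k[X]) • v) := by
  obtain ⟨a, rfl⟩ := Submodule.Quotient.mk_surjective _ u
  obtain ⟨b, rfl⟩ := Submodule.Quotient.mk_surjective _ v
  rw [← Submodule.Quotient.mk_smul, ← Submodule.Quotient.mk_smul, smul_eq_mul, smul_eq_mul,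
    cpair_mk hq, cpair_mk hq]
  ring_nf

lemma cpair_nondeg (hq : q.Monic) (v : k[X] ⧸ Submodule.span k[X] {q})
    (h : ∀ u, cpair q u v = 0) : v = 0 := by
  obtain ⟨b, rfl⟩ := Submodule.Quotient.mk_surjective _ v
  set t := b %ₘ q with ht_def
  have hbt : q ∣ b - t := by
    rw [ht_def, modByMonic_eq_sub_mul_div b q]
    exact ⟨b /ₘ q, by ring⟩
  have hmk : (Submodule.Quotient.mk b : k[X] ⧸ Submodule.span k[X] {q}) =
      Submodule.Quotient.mk t :=
    (Submodule.Quotient.eq _).2 (Ideal.mem_span_singleton.mpr hbt)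
  by_cases ht : t = 0
  · rw [hmk, ht, Submodule.Quotient.mk_zero]
  · exfalso
    have hq1 : q ≠ 1 := by
      intro h1
      rw [ht_def, h1, modByMonic_one] at ht
      exact ht rfl
    have hd0 : q.natDegree ≠ 0 := fun h0 => hq1 (hq.natDegree_eq_zero.mp h0)
    have hdt : t.natDegree < q.natDegree :=
      natDegree_lt_natDegree ht (degree_modByMonic_lt b hq)
    set s := q.natDegree - 1 - t.natDegree with hs
    have key := h (Submodule.Quotient.mk (X ^ s))
    rw [hmk, cpair_mk hq] at key
    have hXt : (X ^ s * t) ≠ 0 := mul_ne_zero (pow_ne_zero _ X_ne_zero) ht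
    have hdeg : (X ^ s * t).degree < q.degree := by
      rw [degree_eq_natDegree hXt, degree_eq_natDegree hq.ne_zero]
      rw [natDegree_mul (pow_ne_zero _ X_ne_zero) ht, natDegree_X_pow]
      exact_mod_cast by omega
    rw [lam, (modByMonic_eq_self_iff hq).2 hdeg] at key
    have hidx : q.natDegree - 1 = t.natDegree + s := by omega
    rw [hidx, coeff_X_pow_mul] at key
    exact (leadingCoeff_ne_zero.mpr ht) key


theorem exists_unit_conj_transpose {n : ℕ} (A : Matrix (Fin n) (Fin n) k) :
    ∃ P : Matrix (Fin n) (Fin n) k, IsUnit P ∧ Aᵀ * P = P * A := by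
  classical
  set f : (Fin n → k) →ₗ[k] (Fin n → k) := Matrix.mulVecLin A with hf
  have hTor : Module.IsTorsion k[X] (Module.AEval' f) := by
    intro x
    refine ⟨⟨f.charpoly, mem_nonZeroDivisors_of_ne_zero f.charpoly_monic.ne_zero⟩, ?_⟩
    have hx : x = Module.AEval'.of f ((Module.AEval'.of f).symm x) :=
      (LinearEquiv.apply_symm_apply _ _).symm
    rw [Submonoid.smul_def, hx, ← Module.AEval.of_aeval_smul]
    simp [LinearMap.aeval_self_charpoly]
  obtain ⟨ι, hι, p, hp, e, ⟨eqv⟩⟩ := Module.equiv_directSum_of_isTorsion hTor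
  haveI := hι
  set q : ι → k[X] := fun i => p i ^ e i * C (p i ^ e i).leadingCoeff⁻¹ with hqdef
  have hq0 : ∀ i, p i ^ e i ≠ 0 := fun i => pow_ne_zero _ (hp i).ne_zero
  have hqm : ∀ i, (q i).Monic := fun i => monic_mul_leadingCoeff_inv (hq0 i)
  have hspan : ∀ i, Submodule.span k[X] {p i ^ e i} = Submodule.span k[X] {q i} := by
    intro i
    have hu : IsUnit (C (p i ^ e i).leadingCoeff⁻¹) :=
      isUnit_C.mpr (isUnit_iff_ne_zero.mpr (inv_ne_zero (leadingCoeff_ne_zero.mpr (hq0 i))))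
    refine Submodule.span_singleton_eq_span_singleton.mpr ⟨hu.unit, ?_⟩
    rw [Units.smul_def, smul_eq_mul, mul_comm, hu.unit_spec]
  let N := ⨁ i : ι, k[X] ⧸ Submodule.span k[X] {q i}
  let eqv2 : Module.AEval' f ≃ₗ[k[X]] N :=
    eqv.trans (DFinsupp.mapRange.linearEquiv fun i => Submodule.quotEquivOfEq _ _ (hspan i))
  let E : (Fin n → k) → N := fun x => eqv2 (Module.AEval'.of f x)
  have hE_bij : Function.Bijective E :=
    eqv2.bijective.comp (Module.AEval'.of f).bijective
  have hE_add : ∀ x y, E (x + y) = E x + E y := by intro x y; simp only [E, map_add]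
  have hE_smul : ∀ (r : k) (x), E (r • x) = (C r : k[X]) • E x := by
    intro r x
    show eqv2 (Module.AEval'.of f (r • x)) = _
    rw [_root_.map_smul, ← Module.AEval.C_smul, _root_.map_smul]
  have hE_X : ∀ x, E (A.mulVec x) = (X : k[X]) • E x := by
    intro x
    show eqv2 (Module.AEval'.of f (f x)) = _
    rw [← Module.AEval'.X_smul_of, _root_.map_smul]
  let PN : N → N → k := fun u v => ∑ i, cpair (q i) (u i) (v i)
  have hPN_comm : ∀ u v, PN u v = PN v u := by
    intro u v; exact Finset.sum_congr rfl fun i _ => cpair_comm _ _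
  have hPN_add_left : ∀ u₁ u₂ v, PN (u₁ + u₂) v = PN u₁ v + PN u₂ v := by
    intro u₁ u₂ v
    rw [← Finset.sum_add_distrib]
    refine Finset.sum_congr rfl fun i _ => ?_
    rw [DirectSum.add_apply, cpair_add_left (hqm i)]
  have hPN_Csmul_left : ∀ (r : k) u v, PN ((C r : k[X]) • u) v = r * PN u v := by
    intro r u v
    rw [Finset.mul_sum]
    refine Finset.sum_congr rfl fun i _ => ?_
    rw [DFinsupp.smul_apply, cpair_Csmul_left (hqm i)]
  have hPN_X : ∀ u v, PN ((X : k[X]) • u) v = PN u ((X : k[X]) • v) := by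
    intro u v
    refine Finset.sum_congr rfl fun i _ => ?_
    rw [DFinsupp.smul_apply, DFinsupp.smul_apply, cpair_X (hqm i)]
  have hPN_nondeg : ∀ v, (∀ u, PN u v = 0) → v = 0 := by
    intro v hv
    refine DFinsupp.ext fun j => ?_
    show v j = (0 : N) j
    rw [DFinsupp.zero_apply]
    refine cpair_nondeg (hqm j) (v j) fun w => ?_
    have hthis := hv (DirectSum.of (fun i => k[X] ⧸ Submodule.span k[X] {q i}) j w)
    have hs : PN (DirectSum.of (fun i => k[X] ⧸ Submodule.span k[X] {q i}) j w) v
        = cpair (q j) w (v j) := by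
      refine (Finset.sum_eq_single j (fun i _ hij => ?_) (by simp)).trans ?_
      · rw [DirectSum.of_eq_of_ne _ _ _ hij, cpair_zero_left (hqm i)]
      · rw [DirectSum.of_eq_same]
    rw [hs] at hthis
    exact hthis
  -- bilinearity bundle
  have hB_add_left : ∀ x₁ x₂ y, PN (E (x₁ + x₂)) (E y) = PN (E x₁) (E y) + PN (E x₂) (E y) := by
    intro x₁ x₂ y; rw [hE_add, hPN_add_left]
  have hB_smul_left : ∀ (r : k) x y, PN (E (r • x)) (E y) = r * PN (E x) (E y) := by
    intro r x y; rw [hE_smul, hPN_Csmul_left]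
  have hB_add_right : ∀ x y₁ y₂, PN (E x) (E (y₁ + y₂)) = PN (E x) (E y₁) + PN (E x) (E y₂) := by
    intro x y₁ y₂; rw [hPN_comm, hB_add_left, hPN_comm (E y₁), hPN_comm (E y₂)]
  have hB_smul_right : ∀ (r : k) x y, PN (E x) (E (r • y)) = r * PN (E x) (E y) := by
    intro r x y; rw [hPN_comm, hB_smul_left, hPN_comm]
  let B2 : (Fin n → k) →ₗ[k] (Fin n → k) →ₗ[k] k :=
    { toFun := fun x =>
        { toFun := fun y => PN (E x) (E y)
          map_add' := fun y₁ y₂ => hB_add_right x y₁ y₂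
          map_smul' := fun r y => hB_smul_right r x y }
      map_add' := fun x₁ x₂ => LinearMap.ext fun y => hB_add_left x₁ x₂ y
      map_smul' := fun r x => LinearMap.ext fun y => hB_smul_left r x y }
  set P : Matrix (Fin n) (Fin n) k :=
    Matrix.of (fun i j => B2 (Pi.single i 1) (Pi.single j 1)) with hPdef
  have hBP : ∀ x y, B2 x y = x ⬝ᵥ P.mulVec y := by
    intro x y
    have hsingle : ∀ z : Fin n → k, z = ∑ i, z i • (Pi.single i (1 : k) : Fin n → k) := by
      intro z
      have h1 : ∀ i, (z i • (Pi.single i (1 : k) : Fin n → k)) = Pi.single i (z i) := fun i => by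
        rw [← Pi.single_smul', smul_eq_mul, mul_one]
      rw [Finset.sum_congr rfl (fun i _ => h1 i), Finset.univ_sum_single]
    calc B2 x y = B2 (∑ i, x i • (Pi.single i (1 : k) : Fin n → k))
          (∑ j, y j • (Pi.single j (1 : k) : Fin n → k)) := by rw [← hsingle, ← hsingle]
      _ = ∑ i, ∑ j, x i * (y j * B2 (Pi.single i 1) (Pi.single j 1)) := by
          rw [map_sum]
          have step : ∀ j', (B2 (∑ i, x i • (Pi.single i (1:k) : Fin n → k)))
              (y j' • (Pi.single j' (1:k) : Fin n → k))
              = ∑ i, x i * (y j' * B2 (Pi.single i 1) (Pi.single j' 1)) := by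
            intro j'
            rw [_root_.map_smul, smul_eq_mul, map_sum, LinearMap.sum_apply, Finset.mul_sum]
            refine Finset.sum_congr rfl fun i _ => ?_
            rw [_root_.map_smul, LinearMap.smul_apply, smul_eq_mul]
            ring
          rw [Finset.sum_congr rfl fun j' _ => step j', Finset.sum_comm]
      _ = x ⬝ᵥ P.mulVec y := by
          simp only [dotProduct, Matrix.mulVec, Finset.mul_sum, hPdef, Matrix.of_apply]
          exact Finset.sum_congr rfl fun i _ => Finset.sum_congr rfl fun j _ => by ring
  have hsym : ∀ x y, B2 (A.mulVec x) y = B2 x (A.mulVec y) := by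
    intro x y
    show PN (E (A.mulVec x)) (E y) = PN (E x) (E (A.mulVec y))
    rw [hE_X, hE_X, hPN_X]
  have hker : ∀ w, P.mulVec w = 0 → w = 0 := by
    intro w hw
    have h1 : ∀ x, B2 x w = 0 := fun x => by rw [hBP, hw, dotProduct_zero]
    have h2 : ∀ u, PN u (E w) = 0 := by
      intro u
      obtain ⟨x, rfl⟩ := hE_bij.surjective u
      exact h1 x
    have h3 : E w = 0 := hPN_nondeg _ h2
    have h4 : E 0 = 0 := by
      show eqv2 (Module.AEval'.of f 0) = 0
      simp
    exact hE_bij.injective (h3.trans h4.symm)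
  have hunit : IsUnit P := by
    rw [← Matrix.mulVec_injective_iff_isUnit]
    intro y z hyz
    have h0 : P.mulVec (y - z) = 0 := by
      rw [Matrix.mulVec_sub, hyz, sub_self]
    exact sub_eq_zero.mp (hker _ h0)
  refine ⟨P, hunit, ?_⟩
  ext i j
  have h := hsym (Pi.single i 1) (Pi.single j 1)
  rw [hBP, hBP] at h
  have hL : (A *ᵥ Pi.single i 1) ⬝ᵥ (P *ᵥ Pi.single j 1) = (Aᵀ * P) i j := by
    simp [Matrix.mul_apply, Matrix.mulVec, dotProduct, Pi.single_apply, mul_ite, ite_mul,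
      Finset.sum_ite_eq, Finset.sum_ite_eq', Matrix.transpose_apply]
  have hR : Pi.single i 1 ⬝ᵥ (P *ᵥ (A *ᵥ Pi.single j 1)) = (P * A) i j := by
    simp [Matrix.mul_apply, Matrix.mulVec, dotProduct, Pi.single_apply, mul_ite, ite_mul,
      Finset.sum_ite_eq, Finset.sum_ite_eq', Finset.mul_sum]
  rw [hL, hR] at h
  exact h


section SLsec

variable {n : ℕ}

local notation "SL" => Matrix.SpecialLinearGroup (Fin n) k

lemma tS_mul (a b : SL) : (a * b).transpose = b.transpose * a.transpose := by
  apply Subtype.ext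
  rw [Matrix.SpecialLinearGroup.coe_transpose, Matrix.SpecialLinearGroup.coe_mul,
    Matrix.SpecialLinearGroup.coe_mul, Matrix.SpecialLinearGroup.coe_transpose,
    Matrix.SpecialLinearGroup.coe_transpose, Matrix.transpose_mul]

lemma tS_tS (a : SL) : a.transpose.transpose = a := by
  apply Subtype.ext
  rw [Matrix.SpecialLinearGroup.coe_transpose, Matrix.SpecialLinearGroup.coe_transpose,
    Matrix.transpose_transpose]

lemma tS_one : ((1 : SL)).transpose = 1 := by
  apply Subtype.ext
  rw [Matrix.SpecialLinearGroup.coe_transpose, Matrix.SpecialLinearGroup.coe_one,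
    Matrix.transpose_one]

lemma tS_inv (a : SL) : (a⁻¹).transpose = (a.transpose)⁻¹ := by
  have h : (a⁻¹).transpose * a.transpose = 1 := by
    rw [← tS_mul, mul_inv_cancel, tS_one]
  exact eq_inv_of_mul_eq_one_left h

theorem exists_autom (g : SL) : ∃ ψ : SL ≃* SL, ψ g = g⁻¹ := by
  obtain ⟨P, hP, hconj⟩ := exists_unit_conj_transpose (g : Matrix (Fin n) (Fin n) k)
  have hPdet : IsUnit P.det := (Matrix.isUnit_iff_isUnit_det P).mp hP
  set V : Matrix (Fin n) (Fin n) k := P⁻¹ with hVdef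
  have hVP : V * P = 1 := Matrix.nonsing_inv_mul P hPdet
  have hPV : P * V = 1 := Matrix.mul_nonsing_inv P hPdet
  have hdet : V.det * P.det = 1 := by rw [← Matrix.det_mul, hVP, Matrix.det_one]
  have hdet' : P.det * V.det = 1 := by rw [← Matrix.det_mul, hPV, Matrix.det_one]
  let cS : SL → SL := fun m =>
    ⟨V * (m : Matrix (Fin n) (Fin n) k) * P, by
      rw [Matrix.det_mul, Matrix.det_mul, m.2, mul_one, hdet]⟩
  let cS' : SL → SL := fun m =>
    ⟨P * (m : Matrix (Fin n) (Fin n) k) * V, by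
      rw [Matrix.det_mul, Matrix.det_mul, m.2, mul_one, hdet']⟩
  have cS_mul : ∀ a b : SL, cS (a * b) = cS a * cS b := by
    intro a b
    apply Subtype.ext
    show V * ((a : Matrix (Fin n) (Fin n) k) * b) * P =
      (V * (a : Matrix (Fin n) (Fin n) k) * P) * (V * (b : Matrix (Fin n) (Fin n) k) * P)
    rw [show (V * (a : Matrix (Fin n) (Fin n) k) * P) * (V * (b : Matrix (Fin n) (Fin n) k) * P)
      = V * (a : Matrix (Fin n) (Fin n) k) * (P * V) * ((b : Matrix (Fin n) (Fin n) k) * P) by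
        noncomm_ring, hPV, mul_one]
    noncomm_ring
  have cS_cS' : ∀ m : SL, cS (cS' m) = m := by
    intro m
    apply Subtype.ext
    show V * (P * (m : Matrix (Fin n) (Fin n) k) * V) * P = (m : Matrix (Fin n) (Fin n) k)
    calc V * (P * (m : Matrix (Fin n) (Fin n) k) * V) * P
        = (V * P) * (m : Matrix (Fin n) (Fin n) k) * (V * P) := by noncomm_ring
      _ = (m : Matrix (Fin n) (Fin n) k) := by rw [hVP, one_mul, mul_one]
  have cS'_cS : ∀ m : SL, cS' (cS m) = m := by
    intro m
    apply Subtype.ext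
    show P * (V * (m : Matrix (Fin n) (Fin n) k) * P) * V = (m : Matrix (Fin n) (Fin n) k)
    calc P * (V * (m : Matrix (Fin n) (Fin n) k) * P) * V
        = (P * V) * (m : Matrix (Fin n) (Fin n) k) * (P * V) := by noncomm_ring
      _ = (m : Matrix (Fin n) (Fin n) k) := by rw [hPV, one_mul, mul_one]
  let ψ : SL ≃* SL :=
    { toFun := fun h => (cS h.transpose)⁻¹
      invFun := fun m => (cS' m⁻¹).transpose
      left_inv := fun h => by
        show (cS' ((cS h.transpose)⁻¹)⁻¹).transpose = h
        rw [inv_inv, cS'_cS, tS_tS]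
      right_inv := fun m => by
        show (cS ((cS' m⁻¹).transpose).transpose)⁻¹ = m
        rw [tS_tS, cS_cS', inv_inv]
      map_mul' := fun a b => by
        show (cS (a * b).transpose)⁻¹ = (cS a.transpose)⁻¹ * (cS b.transpose)⁻¹
        rw [tS_mul, cS_mul, _root_.mul_inv_rev]
        }
  refine ⟨ψ, ?_⟩
  show (cS g.transpose)⁻¹ = g⁻¹
  congr 1
  apply Subtype.ext
  show V * ((g : Matrix (Fin n) (Fin n) k))ᵀ * P = (g : Matrix (Fin n) (Fin n) k)
  rw [mul_assoc, hconj, ← mul_assoc, hVP, one_mul]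

end SLsec

theorem achiral_of_aut {G : Type*} [Group G] (H : ∀ g : G, ∃ ψ : G ≃* G, ψ g = g⁻¹) :
    IsAchiral G := by
  intro d w h hmem
  obtain ⟨f, hf⟩ := hmem
  obtain ⟨ψ, hψ⟩ := H h
  refine ⟨fun i => ψ (f i), ?_⟩
  have hcomp : FreeGroup.lift (fun i => ψ (f i)) = ψ.toMonoidHom.comp (FreeGroup.lift f) := by
    apply FreeGroup.ext_hom
    intro a
    simp
  show FreeGroup.lift (fun i => ψ (f i)) w = h⁻¹
  rw [hcomp]
  show ψ (FreeGroup.lift f w) = h⁻¹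
  rw [show FreeGroup.lift f w = h from hf, hψ]

theorem achiral_of_surjective {G Q : Type*} [Group G] [Group Q] (π : G →* Q)
    (hπ : Function.Surjective π) (hG : IsAchiral G) : IsAchiral Q := by
  intro d w h hmem
  obtain ⟨f, hf⟩ := hmem
  choose F hF using fun i => hπ (f i)
  have hcomp : ∀ (f' : Fin d → G),
      FreeGroup.lift (fun i => π (f' i)) = π.comp (FreeGroup.lift f') := by
    intro f'
    apply FreeGroup.ext_hom
    intro a
    simp
  obtain ⟨f', hf'⟩ := hG d w (FreeGroup.lift F w) ⟨F, rfl⟩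
  refine ⟨fun i => π (f' i), ?_⟩
  show FreeGroup.lift (fun i => π (f' i)) w = h⁻¹
  rw [hcomp f']
  show π (FreeGroup.lift f' w) = h⁻¹
  rw [show FreeGroup.lift f' w = (FreeGroup.lift F w)⁻¹ from hf']
  rw [map_inv]
  have : π (FreeGroup.lift F w) = h := by
    have : (π.comp (FreeGroup.lift F) : FreeGroup (Fin d) →* Q) w = π (FreeGroup.lift F w) := rfl
    rw [← this, ← hcomp F]
    have hFf : (fun i => π (F i)) = f := funext hF
    rw [hFf]
    exact hf
  rw [this]

end Stmt6Aux

theorem stmt6 (n : ℕ) (k : Type*) [Field k] :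
    (∀ g : Matrix.SpecialLinearGroup (Fin n) k,
      ∃ ψ : Matrix.SpecialLinearGroup (Fin n) k ≃* Matrix.SpecialLinearGroup (Fin n) k,
        ψ g = g⁻¹) ∧
    IsAchiral (Matrix.SpecialLinearGroup (Fin n) k) ∧
    IsAchiral (Matrix.SpecialLinearGroup (Fin n) k ⧸
      Subgroup.center (Matrix.SpecialLinearGroup (Fin n) k)) := by
  have h1 := fun g => Stmt6Aux.exists_autom (k := k) (n := n) g
  have h2 := Stmt6Aux.achiral_of_aut h1
  exact ⟨h1, h2, Stmt6Aux.achiral_of_surjective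
    (QuotientGroup.mk' (Subgroup.center _)) (QuotientGroup.mk'_surjective _) h2⟩
end

section
/- Let α ∈ F_q* with α³ = 1, α ≠ 1, char F_q ≠ 2, 3, and let A₁ = [[α,α,0],[0,α,1],[0,0,α]] ∈ SL_3(F_q). Then A₁ is conjugate to its transpose in SL_3(F_q) if and only if the equation X³ = α⁻¹ has a solution in F_q. -/
/-! Comparing entries of `B * A₁ = A₁ᵀ * B` forces `B` to vanish above its anti-diagonal, whose
entries are `b, α * b, b`; hence `det B = -α * b ^ 3`, and `det B = 1` gives `(-b) ^ 3 = α⁻¹`. Conversely, for `x ^ 3 = α⁻¹` the anti-diagonal matrix with entries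
`-x, -α * x, -x` intertwines `A₁` and `A₁ᵀ` and has determinant `α * x ^ 3 = 1`. -/

namespace JordanTranspose

variable {F : Type*} [Field F]

lemma transpose_eq (α : F) :
    (!![α, α, 0; 0, α, 1; 0, 0, α]).transpose = !![α, 0, 0; α, α, 0; 0, 1, α] := by
  ext i j
  fin_cases i <;> fin_cases j <;> rfl

theorem det_eq_of_mul_eq_transpose_mul {α : F} (hα : α ≠ 0) {B : Matrix (Fin 3) (Fin 3) F}
    (hB : B * !![α, α, 0; 0, α, 1; 0, 0, α] = (!![α, α, 0; 0, α, 1; 0, 0, α]).transpose * B) :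
    B.det = -α * B 0 2 ^ 3 := by
  rw [transpose_eq] at hB
  have h01 := congrFun₂ hB 0 1
  have h02 := congrFun₂ hB 0 2
  have h11 := congrFun₂ hB 1 1
  have h12 := congrFun₂ hB 1 2
  have h21 := congrFun₂ hB 2 1
  simp only [Matrix.mul_apply, Fin.sum_univ_three, Matrix.of_apply, Matrix.cons_val',
    Matrix.cons_val_zero, Matrix.cons_val_one, Matrix.cons_val_two, Matrix.empty_val',
    Matrix.cons_val_fin_one, Matrix.tail_cons, Matrix.vecHead] at h01 h02 h11 h12 h21
  have hb01 : B 0 1 = 0 := by linear_combination h02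
  have hb00 : B 0 0 = 0 := by
    refine (mul_eq_zero.mp ?_).resolve_right hα
    linear_combination h01
  have hb10 : B 1 0 = 0 := by
    refine (mul_eq_zero.mp ?_).resolve_right hα
    linear_combination h11 + α * hb01
  have hb11 : B 1 1 = α * B 0 2 := by linear_combination h12
  have hb20 : B 2 0 = B 0 2 := by
    refine sub_eq_zero.mp ((mul_eq_zero.mp ?_).resolve_right hα)
    linear_combination h21 + hb11
  rw [Matrix.det_fin_three, hb00, hb01, hb10, hb11, hb20]
  ring

lemma antidiag_mul_eq_transpose_mul (α x : F) :
    !![0, 0, -x; 0, -x * α, 0; -x, 0, 0] * !![α, α, 0; 0, α, 1; 0, 0, α]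
      = (!![α, α, 0; 0, α, 1; 0, 0, α]).transpose * !![0, 0, -x; 0, -x * α, 0; -x, 0, 0] := by
  rw [transpose_eq]
  ext i j
  fin_cases i <;> fin_cases j <;> simp [Matrix.mul_apply, Fin.sum_univ_three] <;> ring

lemma det_antidiag (α x : F) : (!![0, 0, -x; 0, -x * α, 0; -x, 0, 0]).det = α * x ^ 3 := by
  rw [Matrix.det_fin_three]
  simp only [Matrix.of_apply, Matrix.cons_val', Matrix.cons_val_zero, Matrix.cons_val_one,
    Matrix.cons_val_two, Matrix.cons_val_fin_one, Matrix.tail_cons, Matrix.vecHead]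
  ring

end JordanTranspose

open JordanTranspose in
theorem stmt10_general (F : Type*) [Field F]
    (α : F) (hα : α ^ 3 = 1) :
    let A₁ : Matrix (Fin 3) (Fin 3) F := !![α, α, 0; 0, α, 1; 0, 0, α]
    (∃ B : Matrix (Fin 3) (Fin 3) F, B.det = 1 ∧ B * A₁ = A₁.transpose * B) ↔
      ∃ x : F, x ^ 3 = α⁻¹ := by
  intro A₁
  have hα0 : α ≠ 0 := by rintro rfl; simp at hα
  constructor
  · rintro ⟨B, hdet, hB⟩
    refine ⟨-B 0 2, eq_inv_of_mul_eq_one_left ?_⟩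
    rw [← hdet, det_eq_of_mul_eq_transpose_mul hα0 hB]
    ring
  · rintro ⟨x, hx⟩
    refine ⟨_, ?_, antidiag_mul_eq_transpose_mul α x⟩
    rw [det_antidiag, hx, mul_inv_cancel₀ hα0]

theorem stmt10 (F : Type*) [Field F] (hchar2 : ringChar F ≠ 2) (hchar3 : ringChar F ≠ 3)
    (α : F) (hα : α ^ 3 = 1) (hα1 : α ≠ 1) :
    let A₁ : Matrix (Fin 3) (Fin 3) F := !![α, α, 0; 0, α, 1; 0, 0, α]
    (∃ B : Matrix (Fin 3) (Fin 3) F, B.det = 1 ∧ B * A₁ = A₁.transpose * B) ↔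
      ∃ x : F, x ^ 3 = α⁻¹ :=
  stmt10_general F α hα
end

section
/- With notation as above (α a primitive cube root of unity in F_{q²}¹, char ≠ 2, 3), let A₁ = diag(1, α, 1) · A · diag(1, α, 1)⁻¹ where A = [[α, −α², −α/(1+α²)],[0, α, 1],[0, 0, α]] ∈ SU_3(q). Then g = diag(−1, 1, −1) lies in SU_3(q) and satisfies g A₁ g⁻¹ = (Ā₁)⁻¹, where Ā₁ is the entrywise q-th power of A₁. Hence A₁ is conjugate in SU_3(q) to the inverse of its Frobenius conjugate. -/
/-! The bar map `x ↦ x ^ q` is a power of the Frobenius, hence a ring endomorphism of `K`; it fixes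
the entries `0, ±1` of `g` and sends `α` to `α⁻¹ = α ^ 2`. Since `1 + α ^ 2 = -α`, the corner entry of
`A₁` is `1`, and conjugating by `g = g⁻¹` flips the signs of the entries `(0,1)` and `(1,2)`; the
product of the result with `Ā₁` is then `1`, using only `α ^ 3 = 1` and `α ^ 2 + α + 1 = 0`. -/

open Matrix

theorem FiniteField.exists_ringHom_eq_pow_of_card_eq_pow {K : Type*} [Field K] [Fintype K]
    {q k : ℕ} (hK : Fintype.card K = q ^ k) (hk : k ≠ 0) :
    ∃ σ : K →+* K, ∀ x, σ x = x ^ q := by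
  obtain ⟨p, _⟩ := CharP.exists K
  obtain ⟨n, hp, hcard⟩ := FiniteField.card K p
  have := Fact.mk hp
  obtain ⟨m, -, rfl⟩ : ∃ m ≤ (n : ℕ), q = p ^ m :=
    (Nat.dvd_prime_pow hp).1 (hcard ▸ hK ▸ dvd_pow_self q hk)
  exact ⟨iterateFrobenius K p m, iterateFrobenius_def p m⟩

theorem IsPrimitiveRoot.sq_add_self_add_one {R : Type*} [CommRing R] [IsDomain R] {α : R}
    (hα : IsPrimitiveRoot α 3) : α ^ 2 + α + 1 = 0 := by
  have h := hα.geom_sum_eq_zero (by norm_num)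
  simp only [Finset.sum_range_succ, Finset.sum_range_zero, pow_zero, pow_one] at h
  linear_combination h

theorem IsPrimitiveRoot.pow_eq_sq_of_pow_succ_eq_one {M : Type*} [CommMonoid M] {α : M}
    {q : ℕ} (hα : IsPrimitiveRoot α 3) (hq : α ^ (q + 1) = 1) : α ^ q = α ^ 2 :=
  calc α ^ q = α ^ q * α ^ 3 := by rw [hα.pow_eq_one, mul_one]
    _ = α ^ (q + 1) * α ^ 2 := by rw [← pow_add, ← pow_add]
    _ = α ^ 2 := by rw [hq, one_mul]

theorem neg_div_one_add_sq_eq_one {K : Type*} [Field K] {α : K} (h : α ^ 2 + α + 1 = 0) :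
    -α / (1 + α ^ 2) = 1 := by
  have hα : α ≠ 0 := by
    rintro rfl
    norm_num at h
  rw [show 1 + α ^ 2 = -α by linear_combination h, div_self (neg_ne_zero.2 hα)]

section SignDiagonal

variable {R : Type*} [CommRing R]

theorem map_diag_neg_one_one_neg_one {S : Type*} [CommRing S] (σ : R →+* S) :
    (!![-1, 0, 0; 0, 1, 0; 0, 0, -1] : Matrix (Fin 3) (Fin 3) R).map σ =
      !![-1, 0, 0; 0, 1, 0; 0, 0, -1] := by
  ext i j
  fin_cases i <;> fin_cases j <;> simp

theorem transpose_diag_neg_one_one_neg_one_mul_antidiag_mul :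
    (!![-1, 0, 0; 0, 1, 0; 0, 0, -1] : Matrix (Fin 3) (Fin 3) R)ᵀ * !![0, 0, 1; 0, 1, 0; 1, 0, 0] *
      !![-1, 0, 0; 0, 1, 0; 0, 0, -1] = !![0, 0, 1; 0, 1, 0; 1, 0, 0] := by
  ext i j
  fin_cases i <;> fin_cases j <;> simp [mul_apply, Fin.sum_univ_three]

theorem det_diag_neg_one_one_neg_one :
    (!![-1, 0, 0; 0, 1, 0; 0, 0, -1] : Matrix (Fin 3) (Fin 3) R).det = 1 := by
  simp [det_fin_three]

theorem diag_neg_one_one_neg_one_mul_self :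
    (!![-1, 0, 0; 0, 1, 0; 0, 0, -1] * !![-1, 0, 0; 0, 1, 0; 0, 0, -1] : Matrix (Fin 3) (Fin 3) R) =
      1 := by
  ext i j
  fin_cases i <;> fin_cases j <;> simp [mul_apply, Fin.sum_univ_three]

theorem diag_neg_one_one_neg_one_conj_mul_eq_one {ω : R} (h : ω ^ 2 + ω + 1 = 0) :
    !![-1, 0, 0; 0, 1, 0; 0, 0, -1] * !![ω, -ω, 1; 0, ω, ω; 0, 0, ω] *
        !![-1, 0, 0; 0, 1, 0; 0, 0, -1] * !![ω ^ 2, -ω ^ 2, 1; 0, ω ^ 2, ω ^ 2; 0, 0, ω ^ 2] =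
      (1 : Matrix (Fin 3) (Fin 3) R) := by
  have h3 : ω ^ 3 = 1 := by linear_combination (ω - 1) * h
  ext i j
  fin_cases i <;> fin_cases j <;> simp [mul_apply, Fin.sum_univ_three, ← pow_succ', h3]
  linear_combination h

end SignDiagonal

theorem stmt17_general (q : ℕ) (K : Type*) [Field K] [Fintype K]
    (hK : Fintype.card K = q ^ 2)
    (α : K) (hα : IsPrimitiveRoot α 3) (hnorm : α ^ (q + 1) = 1) :
    let B : Matrix (Fin 3) (Fin 3) K := !![0, 0, 1; 0, 1, 0; 1, 0, 0]
    let A₁ : Matrix (Fin 3) (Fin 3) K :=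
      !![α, -α, -α / (1 + α ^ 2); 0, α, α; 0, 0, α]
    let g : Matrix (Fin 3) (Fin 3) K := !![-1, 0, 0; 0, 1, 0; 0, 0, -1]
    (g.transpose * B * (g.map (fun x => x ^ q)) = B ∧ g.det = 1) ∧
      g * A₁ * g⁻¹ = (A₁.map (fun x => x ^ q))⁻¹ := by
  intro B A₁ g
  obtain ⟨σ, hσ⟩ := FiniteField.exists_ringHom_eq_pow_of_card_eq_pow hK two_ne_zero
  have hbar : (fun x : K => x ^ q) = σ := (funext hσ).symm
  have hσα : σ α = α ^ 2 := (hσ α).trans (hα.pow_eq_sq_of_pow_succ_eq_one hnorm)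
  have hω := hα.sq_add_self_add_one
  have hA₁ : A₁ = !![α, -α, 1; 0, α, α; 0, 0, α] := by
    simp only [A₁, neg_div_one_add_sq_eq_one hω]
  have hĀ₁ : A₁.map σ = !![α ^ 2, -α ^ 2, 1; 0, α ^ 2, α ^ 2; 0, 0, α ^ 2] := by
    rw [hA₁]
    ext i j
    fin_cases i <;> fin_cases j <;> simp [hσα]
  have hg_inv : g⁻¹ = g := inv_eq_right_inv diag_neg_one_one_neg_one_mul_self
  rw [hbar, map_diag_neg_one_one_neg_one σ, hg_inv, hĀ₁]
  refine ⟨⟨transpose_diag_neg_one_one_neg_one_mul_antidiag_mul, det_diag_neg_one_one_neg_one⟩, ?_⟩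
  rw [hA₁]
  exact (inv_eq_left_inv (diag_neg_one_one_neg_one_conj_mul_eq_one hω)).symm

theorem stmt17 (q : ℕ) (K : Type*) [Field K] [Fintype K]
    (hK : Fintype.card K = q ^ 2) (hchar2 : ringChar K ≠ 2) (hchar3 : ringChar K ≠ 3)
    (α : K) (hα : IsPrimitiveRoot α 3) (hnorm : α ^ (q + 1) = 1) :
    let B : Matrix (Fin 3) (Fin 3) K := !![0, 0, 1; 0, 1, 0; 1, 0, 0]
    let A₁ : Matrix (Fin 3) (Fin 3) K :=
      !![α, -α, -α / (1 + α ^ 2); 0, α, α; 0, 0, α]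
    let g : Matrix (Fin 3) (Fin 3) K := !![-1, 0, 0; 0, 1, 0; 0, 0, -1]
    (g.transpose * B * (g.map (fun x => x ^ q)) = B ∧ g.det = 1) ∧
      g * A₁ * g⁻¹ = (A₁.map (fun x => x ^ q))⁻¹ :=
  stmt17_general q K hK α hα hnorm
end
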